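/- arXiv:1302.1157 — 2 statements merged into one kernel-verified Lean document; each statement's English description precedes it below -/
import Mathlib

section
/- Asymptotics of the Gamma-ratio sum, case 2λμ = 1 (Lemma 6, second case): Let λ > 0 and μ > 0 with λμ = 1/2. Then lim_{i→∞} (1/log i) ∑_{j=1}^{i−1} ( Γ(j) / Γ(j + 1/2) )² = 1. -/
/-!
Log-convexity of `Γ` gives `Γ(x + 1/2)² ≤ Γ(x) Γ(x + 1) = x Γ(x)²`, and, applied at
`x + 1/2`, `x² Γ(x)² ≤ (x + 1/2) Γ(x + 1/2)²`. Hence `x (Γ(x) / Γ(x + 1/2))² → 1`, i.e. the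
`j`-th term of the sum is asymptotic to `1/j`. Partial sums of asymptotically equivalent
nonnegative series with divergent sum are asymptotically equivalent, and the harmonic sums are
asymptotic to `log i`.
-/

open Filter Topology Asymptotics Finset

namespace Real

lemma Gamma_add_half_sq_le {x : ℝ} (hx : 0 < x) :
    Gamma (x + 1 / 2) ^ 2 ≤ Gamma x * Gamma (x + 1) := by
  have h := Gamma_mul_add_mul_le_rpow_Gamma_mul_rpow_Gamma hx (by linarith : 0 < x + 1)
    one_half_pos one_half_pos (add_halves 1)
  rw [show 1 / 2 * x + 1 / 2 * (x + 1) = x + 1 / 2 by ring, ← sqrt_eq_rpow, ← sqrt_eq_rpow,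
    ← sqrt_mul (Gamma_pos_of_pos hx).le] at h
  calc Gamma (x + 1 / 2) ^ 2 ≤ √(Gamma x * Gamma (x + 1)) ^ 2 := by gcongr
    _ = Gamma x * Gamma (x + 1) :=
        sq_sqrt (mul_pos (Gamma_pos_of_pos hx) (Gamma_pos_of_pos (by linarith))).le

lemma one_le_mul_Gamma_div_Gamma_add_half_sq {x : ℝ} (hx : 0 < x) :
    1 ≤ x * (Gamma x / Gamma (x + 1 / 2)) ^ 2 := by
  have h := Gamma_add_half_sq_le hx
  rw [Gamma_add_one hx.ne'] at h
  have := Gamma_pos_of_pos (by linarith : 0 < x + 1 / 2)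
  rw [div_pow, ← mul_div_assoc, one_le_div (by positivity)]
  linarith

lemma mul_Gamma_div_Gamma_add_half_sq_le {x : ℝ} (hx : 0 < x) :
    x * (Gamma x / Gamma (x + 1 / 2)) ^ 2 ≤ 1 + (2 * x)⁻¹ := by
  have hx' : 0 < x + 1 / 2 := by linarith
  have h := Gamma_add_half_sq_le hx'
  rw [add_assoc, add_halves, Gamma_add_one hx.ne', Gamma_add_one hx'.ne'] at h
  have := Gamma_pos_of_pos hx'
  rw [div_pow, ← mul_div_assoc, div_le_iff₀ (by positivity)]
  calc x * Gamma x ^ 2 = (x * Gamma x) ^ 2 / x := by field_simp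
    _ ≤ Gamma (x + 1 / 2) * ((x + 1 / 2) * Gamma (x + 1 / 2)) / x := by gcongr
    _ = (1 + (2 * x)⁻¹) * Gamma (x + 1 / 2) ^ 2 := by field_simp

lemma tendsto_mul_Gamma_div_Gamma_add_half_sq :
    Tendsto (fun x : ℝ => x * (Gamma x / Gamma (x + 1 / 2)) ^ 2) atTop (𝓝 1) := by
  have hupper : Tendsto (fun x : ℝ => 1 + (2 * x)⁻¹) atTop (𝓝 1) := by
    simpa using tendsto_const_nhds.add
      (tendsto_inv_atTop_zero.comp (tendsto_id.const_mul_atTop (two_pos : (0 : ℝ) < 2)))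
  refine tendsto_of_tendsto_of_tendsto_of_le_of_le' tendsto_const_nhds hupper ?_ ?_ <;>
    filter_upwards [eventually_gt_atTop 0] with x hx
  exacts [one_le_mul_Gamma_div_Gamma_add_half_sq hx, mul_Gamma_div_Gamma_add_half_sq_le hx]

lemma isEquivalent_Gamma_div_Gamma_add_half_sq :
    (fun n : ℕ => (Gamma n / Gamma (n + 1 / 2)) ^ 2) ~[atTop] fun n => (n : ℝ)⁻¹ := by
  refine isEquivalent_of_tendsto_one
    ((tendsto_mul_Gamma_div_Gamma_add_half_sq.comp tendsto_natCast_atTop_atTop).congr fun n => ?_)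
  simp [div_eq_mul_inv, mul_comm]

lemma tendsto_sum_range_inv_sub_log :
    Tendsto (fun n : ℕ => ∑ i ∈ range n, (i : ℝ)⁻¹ - log n) atTop
      (𝓝 eulerMascheroniConstant) := by
  rw [← tendsto_add_atTop_iff_nat 1]
  refine tendsto_harmonic_sub_log_add_one.congr fun n => ?_
  simp [sum_range_succ', harmonic]

lemma isEquivalent_sum_range_inv_log :
    (fun n : ℕ => ∑ i ∈ range n, (i : ℝ)⁻¹) ~[atTop] fun n => log n :=
  IsLittleO.isEquivalent <| (tendsto_sum_range_inv_sub_log.isBigO_one ℝ).trans_isLittleO <|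
    (isLittleO_one_left_iff ℝ).2 <| tendsto_norm_atTop_atTop.comp <|
      tendsto_log_atTop.comp tendsto_natCast_atTop_atTop

end Real

lemma Asymptotics.IsEquivalent.sum_range {f g : ℕ → ℝ} (h : f ~[atTop] g) (hg : 0 ≤ g)
    (hg_sum : Tendsto (fun n => ∑ i ∈ range n, g i) atTop atTop) :
    (fun n => ∑ i ∈ range n, f i) ~[atTop] fun n => ∑ i ∈ range n, g i := by
  simpa [IsEquivalent, Pi.sub_def, ← sum_sub_distrib] using h.isLittleO.sum_range hg hg_sum

lemma Finset.sum_Icc_one_sub_one_eq_sum_range {M : Type*} [AddCommMonoid M] {f : ℕ → M}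
    (hf : f 0 = 0) (n : ℕ) : ∑ j ∈ Icc 1 (n - 1), f j = ∑ j ∈ range n, f j := by
  cases n with
  | zero => simp
  | succ n =>
    rw [Nat.add_sub_cancel, Nat.range_succ_eq_Icc_zero,
      ← insert_Icc_add_one_left_eq_Icc n.zero_le, sum_insert (by simp), hf, zero_add, zero_add]

theorem gamma_ratio_sum_asymptotics_eq_general :
    Tendsto (fun i : ℕ => (1 / Real.log (i : ℝ)) *
        ∑ j ∈ Finset.Icc 1 (i - 1),
          (Real.Gamma (j : ℝ) / Real.Gamma ((j : ℝ) + 1 / 2)) ^ 2)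
      atTop (𝓝 1) := by
  have hlog : Tendsto (fun n : ℕ => Real.log n) atTop atTop :=
    Real.tendsto_log_atTop.comp tendsto_natCast_atTop_atTop
  have hsum_equiv :
      (fun n : ℕ => ∑ j ∈ range n, (Real.Gamma j / Real.Gamma (j + 1 / 2)) ^ 2) ~[atTop]
        fun n => Real.log n :=
    (Real.isEquivalent_Gamma_div_Gamma_add_half_sq.sum_range (fun n => inv_nonneg.2 n.cast_nonneg)
      (Real.isEquivalent_sum_range_inv_log.symm.tendsto_atTop hlog)).trans
      Real.isEquivalent_sum_range_inv_log
  refine ((isEquivalent_iff_tendsto_one (hlog.eventually_ne_atTop 0)).1 hsum_equiv).congr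
    fun i => ?_
  -- the `j = 0` term vanishes because Mathlib's `Γ` takes the junk value `Γ 0 = 0`
  rw [sum_Icc_one_sub_one_eq_sum_range (by simp), Pi.div_apply, one_div_mul_eq_div]

/-- **Asymptotics of the Gamma-ratio sum, case `2λμ = 1`** (Lemma 6, second case):
`lim_{i→∞} (1/log i) ∑_{j=1}^{i−1} (Γ(j)/Γ(j+1/2))² = 1`. -/
theorem gamma_ratio_sum_asymptotics_eq (lam mu : ℝ) (hlam : 0 < lam) (hmu : 0 < mu)
    (h : lam * mu = 1 / 2) :
    Tendsto (fun i : ℕ => (1 / Real.log (i : ℝ)) *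
        ∑ j ∈ Finset.Icc 1 (i - 1),
          (Real.Gamma (j : ℝ) / Real.Gamma ((j : ℝ) + 1 / 2)) ^ 2)
      atTop (𝓝 1) :=
  gamma_ratio_sum_asymptotics_eq_general
end

section
/- Geometrically weighted Gamma-ratio sum decays at rate i^{−2} (Lemma 7): Let λ > 0 and μ > 0 with λμ not an integer greater than or equal to 2 (so Γ(j+1−λμ) is finite and nonzero for all integers j ≥ 1), and let 0 < ρ < 1. Then ρ / log(ρ^{−1}) ≤ liminf_{i→∞} i^{2−2λμ} ∑_{j=1}^{i−1} ρ^{i−j} ( Γ(j) / Γ(j+1−λμ) )² and limsup_{i→∞} i^{2−2λμ} ∑_{j=1}^{i−1} ρ^{i−j} ( Γ(j) / Γ(j+1−λμ) )² ≤ 1 / log(ρ^{−1}). In particular the sequence i^{−2λμ} ∑_{j=1}^{i−1} ρ^{i−j} (Γ(j)/Γ(j+1−λμ))² is Θ(i^{−2}) as i → ∞. -/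
/-!
Wendel's limit `n ^ s Γ(n) / Γ(n + s) → 1` holds for every real `s`: for `0 < s ≤ 1` it is squeezed
out of the log-convexity of `Γ`, and `Γ(x + 1) = x Γ(x)` moves it along `s ↦ s ± 1`. With
`a = λμ` and `f j = (Γ(j) / Γ(j + 1 - a))²` it gives `j ^ (2 - 2a) f j → 1`.

The sums `S i = ∑_{1 ≤ j < i} ρ^{i-j} f j` satisfy `S (i + 1) = ρ (S i + f i)`, so
`x i = i ^ (2 - 2a) S i` obeys `x (i + 1) = c i x i + d i` with `c i → ρ` and `d i → ρ`. Since
`|ρ| < 1` this recurrence contracts, and `x i → ρ / (1 - ρ)`. The liminf and limsup bounds are then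
`1 - ρ ≤ log ρ⁻¹ ≤ ρ⁻¹ - 1`, and the `Θ(i⁻²)` bounds hold because the limit is positive.
-/

open Filter Topology

namespace Real

lemma log_Gamma_add_one {y : ℝ} (hy : 0 < y) :
    log (Gamma (y + 1)) = log (Gamma y) + log y := by
  rw [Gamma_add_one hy.ne', log_mul hy.ne' (Gamma_pos_of_pos hy).ne', add_comm]

lemma Gamma_nat_add_le_mul_rpow {n : ℕ} (hn : n ≠ 0) {x : ℝ} (hx₀ : 0 < x) (hx₁ : x ≤ 1) :
    Gamma (n + x) ≤ Gamma n * (n : ℝ) ^ x := by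
  have hn₀ : (0 : ℝ) < n := by positivity
  rw [← log_le_log_iff (Gamma_pos_of_pos (by positivity)) (by positivity),
    log_mul (Gamma_pos_of_pos hn₀).ne' (by positivity), log_rpow hn₀]
  exact BohrMollerup.f_add_nat_le convexOn_log_Gamma log_Gamma_add_one hn hx₀ hx₁

lemma Gamma_mul_rpow_le_Gamma_nat_add {n : ℕ} (hn : 2 ≤ n) {x : ℝ} (hx : 0 < x) :
    Gamma n * ((n : ℝ) - 1) ^ x ≤ Gamma (n + x) := by
  have hn₁ : (1 : ℝ) < n := by exact_mod_cast hn
  rw [← log_le_log_iff (by positivity [Gamma_pos_of_pos (by linarith : (0 : ℝ) < n)])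
      (Gamma_pos_of_pos (by positivity)),
    log_mul (Gamma_pos_of_pos (by linarith)).ne' (by positivity), log_rpow (by linarith)]
  exact BohrMollerup.f_add_nat_ge convexOn_log_Gamma log_Gamma_add_one hn hx

lemma tendsto_rpow_mul_Gamma_div_Gamma_add_of_mem_Ioc {x : ℝ} (hx₀ : 0 < x) (hx₁ : x ≤ 1) :
    Tendsto (fun n : ℕ ↦ (n : ℝ) ^ x * Gamma n / Gamma (n + x)) atTop (𝓝 1) := by
  have hupper : Tendsto (fun n : ℕ ↦ ((n : ℝ) / (n + -1)) ^ x) atTop (𝓝 1) := by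
    simpa using (tendsto_natCast_div_add_atTop (-1 : ℝ)).rpow_const (Or.inl one_ne_zero) (p := x)
  refine tendsto_of_tendsto_of_tendsto_of_le_of_le' tendsto_const_nhds hupper ?_ ?_
  · filter_upwards [eventually_ne_atTop 0] with n hn
    rw [le_div_iff₀ (Gamma_pos_of_pos (by positivity)), one_mul, mul_comm]
    exact Gamma_nat_add_le_mul_rpow hn hx₀ hx₁
  · filter_upwards [eventually_ge_atTop 2] with n hn
    have hn₁ : (1 : ℝ) < n := by exact_mod_cast hn
    rw [div_le_iff₀ (Gamma_pos_of_pos (by positivity)), ← sub_eq_add_neg,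
      div_rpow (by linarith) (by linarith), div_mul_eq_mul_div,
      le_div_iff₀ (by simpa using rpow_pos_of_pos (sub_pos.2 hn₁) x)]
    nlinarith [Gamma_mul_rpow_le_Gamma_nat_add hn hx₀, rpow_pos_of_pos (by linarith : (0 : ℝ) < n) x]

lemma tendsto_rpow_mul_Gamma_div_Gamma_add_iff_add_one (s : ℝ) :
    Tendsto (fun n : ℕ ↦ (n : ℝ) ^ (s + 1) * Gamma n / Gamma (n + (s + 1))) atTop (𝓝 1) ↔
      Tendsto (fun n : ℕ ↦ (n : ℝ) ^ s * Gamma n / Gamma (n + s)) atTop (𝓝 1) := by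
  have hshift : ∀ᶠ n : ℕ in atTop, (n : ℝ) ^ (s + 1) * Gamma n / Gamma (n + (s + 1)) =
      (n : ℝ) ^ s * Gamma n / Gamma (n + s) * (n / (n + s)) := by
    filter_upwards [eventually_gt_atTop 0, eventually_gt_atTop ⌈-s⌉₊] with n hn hns
    have hn₀ : (0 : ℝ) < n := by exact_mod_cast hn
    have hns₀ : (n : ℝ) + s ≠ 0 := by
      have := Nat.lt_of_ceil_lt hns; linarith
    rw [← add_assoc, Gamma_add_one hns₀, rpow_add_one hn₀.ne']
    field_simp
  have hratio := tendsto_natCast_div_add_atTop s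
  constructor
  · intro h
    refine (div_one (1 : ℝ) ▸ h.div hratio one_ne_zero).congr' ?_
    filter_upwards [hshift, hratio.eventually_ne one_ne_zero] with n hn hn'
    rw [Pi.div_apply, hn, mul_div_cancel_right₀ _ hn']
  · intro h
    simpa using (h.mul hratio).congr' (hshift.mono fun n hn ↦ hn.symm)

theorem tendsto_rpow_mul_Gamma_div_Gamma_add (s : ℝ) :
    Tendsto (fun n : ℕ ↦ (n : ℝ) ^ s * Gamma n / Gamma (n + s)) atTop (𝓝 1) := by
  set t := s - ⌈s⌉ + 1
  have ht : t + (⌈s⌉ - 1 : ℤ) = s := by push_cast; ring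
  rw [← ht]
  induction ⌈s⌉ - 1 using Int.induction_on with
  | zero =>
    simpa using tendsto_rpow_mul_Gamma_div_Gamma_add_of_mem_Ioc
      (by linarith [Int.ceil_lt_add_one s] : 0 < t) (by linarith [Int.le_ceil s])
  | succ k ih =>
    simpa [← add_assoc] using (tendsto_rpow_mul_Gamma_div_Gamma_add_iff_add_one _).2 ih
  | pred k ih =>
    refine (tendsto_rpow_mul_Gamma_div_Gamma_add_iff_add_one _).1 ?_
    convert ih using 5 <;> push_cast <;> ring

end Real

lemma tendsto_zero_of_le_mul_add {u δ : ℕ → ℝ} {q : ℝ} (hq₀ : 0 ≤ q) (hq₁ : q < 1)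
    (hu : ∀ i, 0 ≤ u i) (hrec : ∀ᶠ i in atTop, u (i + 1) ≤ q * u i + δ i)
    (hδ : Tendsto δ atTop (𝓝 0)) : Tendsto u atTop (𝓝 0) := by
  refine tendsto_order.2 ⟨fun a ha ↦ Eventually.of_forall fun i ↦ ha.trans_le (hu i), fun ε hε ↦ ?_⟩
  set η := ε / 2 with hη_def
  have hη : 0 < (1 - q) * η := by positivity [sub_pos.2 hq₁]
  obtain ⟨N, hN⟩ := eventually_atTop.1 (hrec.and (hδ.eventually_lt_const hη))
  have hcontract : ∀ m, u (N + m) - η ≤ q ^ m * (u N - η) := by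
    intro m
    induction m with
    | zero => simp
    | succ m ih =>
      obtain ⟨hstep, hsmall⟩ := hN (N + m) (Nat.le_add_right N m)
      calc u (N + (m + 1)) - η ≤ q * (u (N + m) - η) := by rw [← add_assoc]; linarith
        _ ≤ q * (q ^ m * (u N - η)) := mul_le_mul_of_nonneg_left ih hq₀
        _ = q ^ (m + 1) * (u N - η) := by ring
  have hpow : Tendsto (fun m ↦ q ^ m * (u N - η)) atTop (𝓝 0) := by
    simpa using (tendsto_pow_atTop_nhds_zero_of_lt_one hq₀ hq₁).mul_const (u N - η)
  obtain ⟨M, hM⟩ := eventually_atTop.1 (hpow.eventually_lt_const (by positivity : (0 : ℝ) < η))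
  filter_upwards [eventually_ge_atTop (N + M)] with i hi
  obtain ⟨m, rfl⟩ := Nat.exists_eq_add_of_le (le_of_add_le_left hi)
  linarith [hcontract m, hM m (by omega), hη_def]

theorem tendsto_of_eventually_eq_mul_add {x c d : ℕ → ℝ} {r e : ℝ} (hr : |r| < 1)
    (hrec : ∀ᶠ i in atTop, x (i + 1) = c i * x i + d i)
    (hc : Tendsto c atTop (𝓝 r)) (hd : Tendsto d atTop (𝓝 e)) :
    Tendsto x atTop (𝓝 (e / (1 - r))) := by
  set L := e / (1 - r)
  have hL : r * L + e - L = 0 := by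
    have : 1 - r ≠ 0 := by linarith [le_abs_self r]
    simp only [L]; field_simp; ring
  set q := (1 + |r|) / 2 with hq
  have hδ : Tendsto (fun i ↦ |c i * L + d i - L|) atTop (𝓝 0) := by
    simpa [hL] using (((hc.mul_const L).add hd).sub_const L).abs
  rw [tendsto_iff_norm_sub_tendsto_zero]
  refine tendsto_zero_of_le_mul_add (q := q) (by positivity) (by linarith [hq])
    (fun i ↦ norm_nonneg _) ?_ hδ
  filter_upwards [hrec, hc.abs.eventually_le_const (by linarith [hq] : |r| < q)] with i hi hci
  rw [Real.norm_eq_abs, Real.norm_eq_abs, hi]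
  calc |c i * x i + d i - L| = |c i * (x i - L) + (c i * L + d i - L)| := by ring_nf
    _ ≤ |c i| * |x i - L| + |c i * L + d i - L| := by
      rw [← abs_mul]; exact abs_add_le _ _
    _ ≤ q * |x i - L| + |c i * L + d i - L| := by gcongr

lemma sum_Icc_pow_sub_mul_succ {R : Type*} [CommSemiring R] (ρ : R) (f : ℕ → R) {i : ℕ}
    (hi : 1 ≤ i) :
    ∑ j ∈ Finset.Icc 1 (i + 1 - 1), ρ ^ (i + 1 - j) * f j =
      ρ * (∑ j ∈ Finset.Icc 1 (i - 1), ρ ^ (i - j) * f j + f i) := by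
  change ∑ j ∈ Finset.Ico 1 (i + 1), _ = ρ * (∑ j ∈ Finset.Ico 1 i, _ + _)
  rw [Finset.sum_Ico_succ_top hi, Nat.add_sub_cancel_left, pow_one, mul_add, Finset.mul_sum]
  congr 1
  refine Finset.sum_congr rfl fun j hj ↦ ?_
  rw [Nat.sub_add_comm (Finset.mem_Ico.1 hj).2.le, pow_succ]
  ring

theorem tendsto_mul_sum_geometric_of_tendsto {ρ A : ℝ} (hρ : |ρ| < 1) {w f : ℕ → ℝ}
    (hw : ∀ᶠ i in atTop, w i ≠ 0) (hw' : Tendsto (fun i ↦ w (i + 1) / w i) atTop (𝓝 1))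
    (hf : Tendsto (fun i ↦ w i * f i) atTop (𝓝 A)) :
    Tendsto (fun i ↦ w i * ∑ j ∈ Finset.Icc 1 (i - 1), ρ ^ (i - j) * f j) atTop
      (𝓝 (ρ * A / (1 - ρ))) := by
  have hc : Tendsto (fun i ↦ ρ * (w (i + 1) / w i)) atTop (𝓝 ρ) := by
    simpa using hw'.const_mul ρ
  refine tendsto_of_eventually_eq_mul_add hρ ?_ hc (hc.mul hf)
  filter_upwards [hw, eventually_ge_atTop 1] with i hwi hi
  rw [sum_Icc_pow_sub_mul_succ ρ f hi]
  field_simp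

theorem tendsto_rpow_mul_sum_geometric_Gamma_div_sq (a : ℝ) {ρ : ℝ} (hρ : |ρ| < 1) :
    Tendsto (fun i : ℕ ↦ (i : ℝ) ^ (2 - 2 * a) * ∑ j ∈ Finset.Icc 1 (i - 1),
      ρ ^ (i - j) * (Real.Gamma j / Real.Gamma (j + 1 - a)) ^ 2) atTop (𝓝 (ρ / (1 - ρ))) := by
  have hw' : Tendsto (fun i : ℕ ↦ ((i + 1 : ℕ) : ℝ) ^ (2 - 2 * a) / (i : ℝ) ^ (2 - 2 * a))
      atTop (𝓝 1) := by
    have hratio : Tendsto (fun i : ℕ ↦ ((i : ℝ) / (i + 1))⁻¹) atTop (𝓝 1) := by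
      simpa using (tendsto_natCast_div_add_atTop (1 : ℝ)).inv₀ one_ne_zero
    have := hratio.rpow_const (Or.inl one_ne_zero) (p := 2 - 2 * a)
    rw [Real.one_rpow] at this
    refine this.congr' ?_
    filter_upwards [eventually_gt_atTop 0] with i hi
    rw [inv_div, Real.div_rpow (by positivity) (by positivity), Nat.cast_succ]
  have hf : Tendsto (fun j : ℕ ↦ (j : ℝ) ^ (2 - 2 * a) *
      (Real.Gamma j / Real.Gamma (j + 1 - a)) ^ 2) atTop (𝓝 1) := by
    have := (Real.tendsto_rpow_mul_Gamma_div_Gamma_add (1 - a)).pow 2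
    rw [one_pow] at this
    refine this.congr' ?_
    filter_upwards [eventually_gt_atTop 0] with j hj
    rw [mul_div_assoc, mul_pow, ← Real.rpow_natCast, ← Real.rpow_mul (by positivity),
      ← add_sub_assoc]
    ring_nf
  simpa using tendsto_mul_sum_geometric_of_tendsto hρ
    (eventually_gt_atTop 0 |>.mono fun i hi ↦ by positivity) hw' hf

theorem geometric_gamma_ratio_sum_rate_general (lam mu ρ : ℝ)
    (hρ0 : 0 < ρ) (hρ1 : ρ < 1) :
    (ρ / Real.log ρ⁻¹ ≤ liminf (fun i : ℕ => (i : ℝ) ^ (2 - 2 * lam * mu) *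
        ∑ j ∈ Finset.Icc 1 (i - 1), ρ ^ (i - j) *
          (Real.Gamma (j : ℝ) / Real.Gamma ((j : ℝ) + 1 - lam * mu)) ^ 2) atTop) ∧
    (limsup (fun i : ℕ => (i : ℝ) ^ (2 - 2 * lam * mu) *
        ∑ j ∈ Finset.Icc 1 (i - 1), ρ ^ (i - j) *
          (Real.Gamma (j : ℝ) / Real.Gamma ((j : ℝ) + 1 - lam * mu)) ^ 2) atTop
      ≤ 1 / Real.log ρ⁻¹) ∧
    (∃ c₁ : ℝ, 0 < c₁ ∧ ∃ c₂ : ℝ, 0 < c₂ ∧ ∃ i₀ : ℕ, ∀ i : ℕ, i₀ ≤ i →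
      c₁ * (i : ℝ) ^ (-2 : ℝ) ≤ (i : ℝ) ^ (-(2 * lam * mu)) *
        ∑ j ∈ Finset.Icc 1 (i - 1), ρ ^ (i - j) *
          (Real.Gamma (j : ℝ) / Real.Gamma ((j : ℝ) + 1 - lam * mu)) ^ 2 ∧
      (i : ℝ) ^ (-(2 * lam * mu)) *
        ∑ j ∈ Finset.Icc 1 (i - 1), ρ ^ (i - j) *
          (Real.Gamma (j : ℝ) / Real.Gamma ((j : ℝ) + 1 - lam * mu)) ^ 2 ≤
        c₂ * (i : ℝ) ^ (-2 : ℝ)) := by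
  rw [mul_assoc 2 lam mu]
  have hlim := tendsto_rpow_mul_sum_geometric_Gamma_div_sq (lam * mu)
    (abs_lt.2 ⟨by linarith, hρ1⟩)
  have hlog_lower : 1 - ρ ≤ Real.log ρ⁻¹ := by
    simpa using Real.one_sub_inv_le_log_of_pos (inv_pos.2 hρ0)
  have hlog_upper : Real.log ρ⁻¹ ≤ ρ⁻¹ - 1 := Real.log_le_sub_one_of_pos (inv_pos.2 hρ0)
  have hL : 0 < ρ / (1 - ρ) := div_pos hρ0 (sub_pos.2 hρ1)
  refine ⟨?_, ?_, ?_⟩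
  · rw [hlim.liminf_eq]
    exact div_le_div_of_nonneg_left hρ0.le (sub_pos.2 hρ1) hlog_lower
  · rw [hlim.limsup_eq, div_le_div_iff₀ (sub_pos.2 hρ1) (by linarith), one_mul]
    calc ρ * Real.log ρ⁻¹ ≤ ρ * (ρ⁻¹ - 1) := mul_le_mul_of_nonneg_left hlog_upper hρ0.le
      _ = 1 - ρ := by field_simp
  · obtain ⟨i₀, hi₀⟩ := eventually_atTop.1 ((hlim.eventually
      (Icc_mem_nhds (half_lt_self hL) (lt_two_mul_self hL))).and (eventually_gt_atTop 0))
    refine ⟨_, half_pos hL, _, mul_pos two_pos hL, i₀, fun i hi ↦ ?_⟩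
    obtain ⟨⟨hlow, hupp⟩, hi_pos⟩ := hi₀ i hi
    have hsplit : (i : ℝ) ^ (-(2 * (lam * mu))) =
        (i : ℝ) ^ (-2 : ℝ) * (i : ℝ) ^ (2 - 2 * (lam * mu)) := by
      rw [← Real.rpow_add (by positivity)]; congr 1; ring
    rw [hsplit, mul_assoc, mul_comm (ρ / (1 - ρ) / 2), mul_comm (2 * (ρ / (1 - ρ)))]
    exact ⟨by gcongr, by gcongr⟩

/-- **Geometrically weighted Gamma-ratio sum decays at rate `i⁻²`** (Lemma 7):
for `0 < ρ < 1`,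
`ρ/log(ρ⁻¹) ≤ liminf i^{2−2λμ} ∑_{j=1}^{i−1} ρ^{i−j} (Γ(j)/Γ(j+1−λμ))²`,
`limsup i^{2−2λμ} ∑_{j=1}^{i−1} ρ^{i−j} (Γ(j)/Γ(j+1−λμ))² ≤ 1/log(ρ⁻¹)`;
in particular `i^{−2λμ} ∑_{j=1}^{i−1} ρ^{i−j} (Γ(j)/Γ(j+1−λμ))²` is `Θ(i⁻²)`. -/
theorem geometric_gamma_ratio_sum_rate (lam mu ρ : ℝ) (hlam : 0 < lam) (hmu : 0 < mu)
    (hnotint : ∀ n : ℕ, 2 ≤ n → lam * mu ≠ (n : ℝ))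
    (hρ0 : 0 < ρ) (hρ1 : ρ < 1) :
    (ρ / Real.log ρ⁻¹ ≤ liminf (fun i : ℕ => (i : ℝ) ^ (2 - 2 * lam * mu) *
        ∑ j ∈ Finset.Icc 1 (i - 1), ρ ^ (i - j) *
          (Real.Gamma (j : ℝ) / Real.Gamma ((j : ℝ) + 1 - lam * mu)) ^ 2) atTop) ∧
    (limsup (fun i : ℕ => (i : ℝ) ^ (2 - 2 * lam * mu) *
        ∑ j ∈ Finset.Icc 1 (i - 1), ρ ^ (i - j) *
          (Real.Gamma (j : ℝ) / Real.Gamma ((j : ℝ) + 1 - lam * mu)) ^ 2) atTop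
      ≤ 1 / Real.log ρ⁻¹) ∧
    (∃ c₁ : ℝ, 0 < c₁ ∧ ∃ c₂ : ℝ, 0 < c₂ ∧ ∃ i₀ : ℕ, ∀ i : ℕ, i₀ ≤ i →
      c₁ * (i : ℝ) ^ (-2 : ℝ) ≤ (i : ℝ) ^ (-(2 * lam * mu)) *
        ∑ j ∈ Finset.Icc 1 (i - 1), ρ ^ (i - j) *
          (Real.Gamma (j : ℝ) / Real.Gamma ((j : ℝ) + 1 - lam * mu)) ^ 2 ∧
      (i : ℝ) ^ (-(2 * lam * mu)) *
        ∑ j ∈ Finset.Icc 1 (i - 1), ρ ^ (i - j) *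
          (Real.Gamma (j : ℝ) / Real.Gamma ((j : ℝ) + 1 - lam * mu)) ^ 2 ≤
        c₂ * (i : ℝ) ^ (-2 : ℝ)) :=
  geometric_gamma_ratio_sum_rate_general lam mu ρ hρ0 hρ1
end
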